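/- arXiv:0803.2379 — 2 statements merged into one kernel-verified Lean document; each statement's English description precedes it below -/
import Mathlib

section
/- Let n ≥ 1 and let M be an n×n matrix over a commutative ring R such that every entry of the first row and every entry of the first column of M equals 1. Then det(M) = Σ_{1≤i,j≤n} (−1)^{i+j} det(M_{i,j}), where the sum runs over all n² pairs (i,j). -/
/-- If an `(n+1) × (n+1)` matrix `M` over a commutative ring has all entries of its
first row and first column equal to `1`, then
`det M = ∑_{i,j} (-1)^{i+j} det (M_{i,j})`, where `M_{i,j}` is the minor of `M`
obtained by deleting row `j` and column `i`. -/
theorem det_eq_sum_signed_minors_of_first_row_col_one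
    {R : Type*} [CommRing R] (n : ℕ) (M : Matrix (Fin (n + 1)) (Fin (n + 1)) R)
    (hrow : ∀ j : Fin (n + 1), M 0 j = 1)
    (hcol : ∀ i : Fin (n + 1), M i 0 = 1) :
    M.det =
      ∑ i : Fin (n + 1), ∑ j : Fin (n + 1),
        (-1 : R) ^ ((i : ℕ) + (j : ℕ)) *
          (M.submatrix (Fin.succAbove j) (Fin.succAbove i)).det := by
  have key : ∀ i : Fin (n + 1),
      ∑ j : Fin (n + 1), (-1 : R) ^ ((i : ℕ) + (j : ℕ)) *
          (M.submatrix (Fin.succAbove j) (Fin.succAbove i)).det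
        = (M.updateCol i (fun _ => 1)).det := by
    intro i
    rw [Matrix.det_succ_column _ i]
    refine Finset.sum_congr rfl fun j _ => ?_
    rw [Matrix.updateCol_self, Matrix.submatrix_updateCol_succAbove]
    ring_nf
  calc M.det = (M.updateCol 0 (fun _ => 1)).det := by
        congr 1
        ext a b
        rw [Matrix.updateCol_apply]
        split
        · next h => rw [h, hcol]
        · rfl
    _ = ∑ i : Fin (n + 1), (M.updateCol i (fun _ => 1)).det := by
        rw [Finset.sum_eq_single 0]
        · intro b _ hb
          apply Matrix.det_zero_of_column_eq hb.symm
          intro k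
          rw [Matrix.updateCol_self, Matrix.updateCol_ne hb.symm, hcol]
        · intro h; exact absurd (Finset.mem_univ 0) h
    _ = _ := by
        refine Finset.sum_congr rfl fun i _ => (key i).symm
end

section
/- Fix n ≥ 1 and let P be the generic matrix with first row and first column equal to 1: the n×n matrix over ℤ[X_{k,l} : 1 ≤ k,l ≤ n] with P_{k,l} = X_{k,l} when k ≠ 1 and l ≠ 1, and P_{k,l} = 1 when k = 1 or l = 1. For every permutation σ of {1,…,n}, the coefficient of the monomial m_σ = Π_{k ≠ 1, σ(k) ≠ 1} X_{k,σ(k)} in the polynomial det(P) equals sign(σ). -/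
/-!
Expanding the determinant over permutations, the term of `τ` is `sign τ` times the monomial
`m_τ`, because the entries in the border row and column are `1`. The monomial `m_τ` records
`τ k` for every `k ≠ o` with `τ k ≠ o`, which pins down `τ` on all `k ≠ o` and hence everywhere.
So `τ ↦ m_τ` is injective and only `τ = σ` contributes to the coefficient of `m_σ`.
-/

open MvPolynomial Finset

theorem Equiv.Perm.eq_of_forall_ne_apply_eq {ι : Type*} {o : ι} {σ τ : Equiv.Perm ι}
    (h : ∀ k, k ≠ o → σ k = τ k) : σ = τ := by
  ext k
  by_cases hk : k = o
  · subst hk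
    by_contra hne
    obtain ⟨j, hj⟩ := τ.surjective (σ k)
    have hjk : j ≠ k := by rintro rfl; exact hne hj.symm
    exact hjk (σ.injective ((h j hjk).trans hj))
  · exact h k hk

section Bordered

variable {ι : Type*} [DecidableEq ι]

noncomputable def borderedGenericMatrix (R : Type*) [CommRing R] (o : ι) :
    Matrix ι ι (MvPolynomial (ι × ι) R) :=
  Matrix.of fun k l => if k = o ∨ l = o then 1 else X (k, l)

variable [Fintype ι]

noncomputable def borderedExponent (o : ι) (τ : Equiv.Perm ι) : (ι × ι) →₀ ℕ :=
  ∑ k ∈ univ.filter (fun k => k ≠ o ∧ τ k ≠ o), Finsupp.single (k, τ k) 1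

theorem borderedExponent_apply (o : ι) (τ : Equiv.Perm ι) (a b : ι) :
    borderedExponent o τ (a, b) = if a ≠ o ∧ τ a ≠ o ∧ τ a = b then 1 else 0 := by
  simp [borderedExponent, Finsupp.finsetSum_apply, Finsupp.single_apply, ite_and, sum_ite_eq']

theorem borderedExponent_injective (o : ι) : Function.Injective (borderedExponent o) := by
  have apply_eq_of_eq : ∀ {σ τ : Equiv.Perm ι}, borderedExponent o σ = borderedExponent o τ →
      ∀ k, k ≠ o → σ k ≠ o → τ k = σ k := by
    intro σ τ h k hk hσk
    have hkσk := congrArg (· (k, σ k)) h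
    simp only [borderedExponent_apply] at hkσk
    by_contra hne
    simp [hk, hσk, hne] at hkσk
  intro σ τ h
  refine Equiv.Perm.eq_of_forall_ne_apply_eq (o := o) fun k hk => ?_
  by_cases hσk : σ k = o
  · by_cases hτk : τ k = o
    · rw [hσk, hτk]
    · exact apply_eq_of_eq h.symm k hk hτk
  · exact (apply_eq_of_eq h k hk hσk).symm

theorem prod_borderedGenericMatrix_apply (R : Type*) [CommRing R] (o : ι) (τ : Equiv.Perm ι) :
    ∏ k, borderedGenericMatrix R o k (τ k) = monomial (borderedExponent o τ) 1 := by
  rw [borderedExponent, monomial_sum_one, prod_filter]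
  refine prod_congr rfl fun k _ => ?_
  simp only [borderedGenericMatrix, Matrix.of_apply, X]
  split_ifs <;> tauto

theorem coeff_det_borderedGenericMatrix (R : Type*) [CommRing R] (o : ι) (σ : Equiv.Perm ι) :
    coeff (borderedExponent o σ) (borderedGenericMatrix R o).det = Equiv.Perm.sign σ := by
  rw [← Matrix.det_transpose, Matrix.det_apply, coeff_sum]
  simp only [Matrix.transpose_apply, prod_borderedGenericMatrix_apply, Units.smul_def,
    coeff_smul, coeff_monomial]
  rw [sum_eq_single σ (fun τ _ hτ => by simp [(borderedExponent_injective o).ne hτ]) (by simp)]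
  simp

end Bordered

/-- Let `P` be the generic `(n+1) × (n+1)` matrix over `ℤ[X_{k,l}]` whose
entries in the first row and first column are `1` and whose other entries are
the variables `X_{k,l}`.  For every permutation `σ`, the coefficient in `det P`
of the monomial `m_σ = ∏_{k ≠ 0, σ k ≠ 0} X_{k, σ k}` equals `sign σ`. -/
theorem coeff_det_generic_eq_sign (n : ℕ) (σ : Equiv.Perm (Fin (n + 1))) :
    MvPolynomial.coeff
      (∑ k ∈ Finset.univ.filter (fun k : Fin (n + 1) => k ≠ 0 ∧ σ k ≠ 0),
        Finsupp.single (k, σ k) 1)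
      (Matrix.of fun k l : Fin (n + 1) =>
        if k = 0 ∨ l = 0 then (1 : MvPolynomial (Fin (n + 1) × Fin (n + 1)) ℤ)
        else MvPolynomial.X (k, l)).det
      = (Equiv.Perm.sign σ : ℤ) :=
  (coeff_det_borderedGenericMatrix ℤ 0 σ).trans Int.cast_id
end
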